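/- The lengths of all maximal palindromes of a string T ending at any fixed position i can be partitioned into O(log i) maximal arithmetic progressions (groups with constant common difference). -/
import Mathlib


def IsPal {α : Type*} (P : List α) : Prop := P.reverse = P

def MPE {α : Type*} (T : List α) (i : ℕ) : Set ℕ :=
  {k | 0 < k ∧ k ≤ i ∧ IsPal ((T.take i).drop (i - k)) ∧
    (k = i ∨ i = T.length ∨ T[i - k - 1]? ≠ T[i]?)}

def diffs (s : ℕ → ℕ) (j : ℕ) : ℕ := if j = 0 then s 0 else s j - s (j - 1)

section Aux

variable {α : Type*}

/-- Pointwise palindrome predicate: the length-`k` suffix of `T.take i` is a palindrome. -/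
def PalAt (T : List α) (i k : ℕ) : Prop := ∀ a, a < k → T[i - k + a]? = T[i - 1 - a]?

lemma isPal_iff_palAt {T : List α} {i k : ℕ} (hk : k ≤ i) (hi : i ≤ T.length) :
    IsPal ((T.take i).drop (i - k)) ↔ PalAt T i k := by
  set L := (T.take i).drop (i - k) with hLdef
  have hlen : L.length = k := by
    simp only [hLdef, List.length_drop, List.length_take]
    omega
  have hget : ∀ a, a < k → L[a]? = T[i - k + a]? := by
    intro a ha
    rw [hLdef, List.getElem?_drop, List.getElem?_take, if_pos (by omega)]
  constructor
  · intro hpal a ha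
    have h1 : L.reverse[a]? = L[k - 1 - a]? := by
      rw [List.getElem?_reverse (by omega : a < L.length), hlen]
    rw [hpal] at h1
    rw [hget a ha, hget (k - 1 - a) (by omega)] at h1
    have e : i - k + (k - 1 - a) = i - 1 - a := by omega
    rw [e] at h1
    exact h1
  · intro h
    apply List.ext_getElem?
    intro j
    by_cases hj : j < k
    · rw [List.getElem?_reverse (by omega : j < L.length), hlen,
        hget j hj, hget (k - 1 - j) (by omega)]
      have e : i - k + (k - 1 - j) = i - 1 - j := by omega
      rw [e]
      exact (h j hj).symm
    · rw [List.getElem?_eq_none (by simp [hlen]; omega),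
        List.getElem?_eq_none (by rw [hlen]; omega)]

lemma palAt_core {T : List α} {i p q m : ℕ} (hp : PalAt T i p) (hq : PalAt T i q)
    (hpq : p < q) (hqi : q ≤ i) (hm : m + q = 2 * p) : PalAt T i m := by
  intro a ha
  have h1 := hp (a + (q - p)) (by omega)
  have h2 := hq (p - 1 - a) (by omega)
  have h3 := hp a (by omega)
  have e1 : i - p + (a + (q - p)) = i - m + a := by omega
  have e2 : i - 1 - (a + (q - p)) = i - q + (p - 1 - a) := by omega
  have e3 : i - 1 - (p - 1 - a) = i - p + a := by omega
  rw [e1, e2] at h1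
  rw [e3] at h2
  rw [h1, h2]
  exact h3

lemma palAt_mirror {T : List α} {i v u : ℕ} (hv : PalAt T i v) (huv : u < v) (hvi : v ≤ i) :
    T[i - u - 1]? = T[i - (v - u)]? := by
  have h := hv (v - u - 1) (by omega)
  have e1 : i - v + (v - u - 1) = i - u - 1 := by omega
  have e2 : i - 1 - (v - u - 1) = i - (v - u) := by omega
  rw [e1, e2] at h
  exact h

lemma palAt_period {T : List α} {i y z : ℕ} (hy : PalAt T i y) (hz : PalAt T i z)
    (hyz : y < z) (hzi : z ≤ i) (h2 : z + 1 ≤ 2 * y) :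
    T[i - 2 * (z - y)]? = T[i - (z - y)]? := by
  have h1 := hz (2 * y - z) (by omega)
  have h2' := hy (2 * y - z) (by omega)
  have e1 : i - z + (2 * y - z) = i - 2 * (z - y) := by omega
  have e2 : i - y + (2 * y - z) = i - (z - y) := by omega
  rw [e1] at h1
  rw [e2] at h2'
  rw [h1, ← h2']

/-- The key closure property: `MPE T i` is closed under `(y, z) ↦ 2y - z` for `y < z`. -/
lemma mpe_star {T : List α} {i y z m : ℕ} (hi : i ≤ T.length)
    (hy : y ∈ MPE T i) (hz : z ∈ MPE T i) (hyz : y < z)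
    (hm : m + z = 2 * y) (hm1 : 1 ≤ m) : m ∈ MPE T i := by
  obtain ⟨hy0, hyi, hypal, hymax⟩ := hy
  obtain ⟨hz0, hzi, hzpal, hzmax⟩ := hz
  have hY : PalAt T i y := (isPal_iff_palAt hyi hi).mp hypal
  have hZ : PalAt T i z := (isPal_iff_palAt hzi hi).mp hzpal
  have hM : PalAt T i m := palAt_core hY hZ hyz hzi hm
  refine ⟨hm1, by omega, (isPal_iff_palAt (by omega) hi).mpr hM, ?_⟩
  by_cases hiT : i = T.length
  · exact Or.inr (Or.inl hiT)
  · refine Or.inr (Or.inr ?_)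
    have hne : T[i - y - 1]? ≠ T[i]? := by
      rcases hymax with h | h | h
      · omega
      · exact absurd h hiT
      · exact h
    have m1 : T[i - y - 1]? = T[i - (z - y)]? := palAt_mirror hZ hyz hzi
    have m2 : T[i - m - 1]? = T[i - (z - m)]? := palAt_mirror hZ (by omega) hzi
    have p1 : T[i - 2 * (z - y)]? = T[i - (z - y)]? :=
      palAt_period hY hZ hyz hzi (by omega)
    have e : z - m = 2 * (z - y) := by omega
    rw [m2, e, p1, ← m1]
    exact hne

end Aux

/-- There is an absolute constant `c` such that, for any string `T` and
position `i`, if the lengths of all maximal palindromes of `T` ending at `i`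
are partitioned into maximal runs of equal consecutive difference, then the
number of runs is at most `c * log₂ i + c`. -/
theorem number_of_difference_runs_log.{u} :
    ∃ c : ℕ, ∀ (α : Type u) (T : List α) (i : ℕ), 1 ≤ i → i ≤ T.length →
      ∀ (s : ℕ → ℕ) (g : ℕ),
        (∀ j j', j < j' → j' < g → s j < s j') →
        (∀ k, (∃ j < g, s j = k) ↔ k ∈ MPE T i) →
        0 < g →
        ((Finset.Icc 1 (g - 1)).filter
            (fun j => diffs s j ≠ diffs s (j - 1))).card + 1
          ≤ c * Nat.log 2 i + c := by
  refine ⟨3, ?_⟩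
  intro α T i h1i hiT s g hmono henum hg
  -- basic facts
  have hmem : ∀ j, j < g → s j ∈ MPE T i := fun j hj => (henum (s j)).mp ⟨j, hj, rfl⟩
  have hpos : ∀ j, j < g → 1 ≤ s j := fun j hj => (hmem j hj).1
  have hle : ∀ j, j < g → s j ≤ i := fun j hj => (hmem j hj).2.1
  -- locate an element of MPE within the sequence
  have hloc : ∀ m, m ∈ MPE T i → ∃ j < g, s j = m := fun m hm => (henum m).mpr hm
  set P : ℕ → ℕ := diffs s with hP
  have hP0 : P 0 = s 0 := by simp [hP, diffs]
  have hPj : ∀ j, 1 ≤ j → P j = s j - s (j - 1) := by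
    intro j hj
    rw [hP]
    unfold diffs
    rw [if_neg (by omega)]
  -- step monotonicity of diffs
  have stepN : ∀ j, 1 ≤ j → j ≤ g - 1 → P (j - 1) ≤ P j := by
    intro j hj1 hjg
    by_contra hc
    push_neg at hc
    rcases eq_or_lt_of_le hj1 with h1 | h2
    · -- j = 1
      have hj : j = 1 := h1.symm
      subst hj
      have E0 : P (1 - 1) = s 0 := hP0
      have E1 : P 1 = s 1 - s 0 := hPj 1 le_rfl
      have h01 : s 0 < s 1 := hmono 0 1 (by omega) (by omega)
      have hm1 : 1 ≤ 2 * s 0 - s 1 := by omega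
      obtain ⟨j', hj', hsj'⟩ := hloc (2 * s 0 - s 1)
        (mpe_star hiT (hmem 0 (by omega)) (hmem 1 (by omega)) h01 (by omega) hm1)
      rcases Nat.eq_zero_or_pos j' with h | h
      · subst h; omega
      · have := hmono 0 j' h hj'; omega
    · -- j ≥ 2
      have hj2 : 2 ≤ j := h2
      have hxy : s (j - 2) < s (j - 1) := hmono (j - 2) (j - 1) (by omega) (by omega)
      have hyz : s (j - 1) < s j := hmono (j - 1) j (by omega) (by omega)
      have E1 : P j = s j - s (j - 1) := hPj j (by omega)
      have E2 : P (j - 1) = s (j - 1) - s (j - 2) := by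
        rw [hPj (j - 1) (by omega), show j - 1 - 1 = j - 2 from by omega]
      set m := 2 * s (j - 1) - s j with hm
      have hm1 : 1 ≤ m := by omega
      obtain ⟨j', hj', hsj'⟩ := hloc m
        (mpe_star hiT (hmem (j - 1) (by omega)) (hmem j (by omega)) hyz (by omega) hm1)
      have hmx : s (j - 2) < m := by omega
      have hmy : m < s (j - 1) := by omega
      rcases lt_trichotomy j' (j - 1) with h | h | h
      · rcases lt_trichotomy j' (j - 2) with h' | h' | h'
        · have := hmono j' (j - 2) h' (by omega); omega
        · subst h'; omega
        · omega
      · subst h; omega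
      · have := hmono (j - 1) j' h hj'; omega
  -- monotonicity of diffs
  have monoP : ∀ u v, u ≤ v → v ≤ g - 1 → P u ≤ P v := by
    intro u v huv hv
    induction v with
    | zero => have : u = 0 := by omega
              subst this; exact le_rfl
    | succ v ih =>
      rcases eq_or_lt_of_le huv with h | h
      · subst h; exact le_rfl
      · have h1 : P u ≤ P v := ih (by omega) (by omega)
        have h2 : P v ≤ P (v + 1) := by
          have := stepN (v + 1) (by omega) (by omega)
          simpa using this
        exact h1.trans h2
  -- Fibonacci growth at strict increases
  have stepF : ∀ j, 2 ≤ j → j ≤ g - 1 → P (j - 1) < P j → P (j - 1) + P (j - 2) ≤ P j := by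
    intro j hj2 hjg hlt
    by_contra hc
    push_neg at hc
    have hyz : s (j - 1) < s j := hmono (j - 1) j (by omega) (by omega)
    have hxy : s (j - 2) < s (j - 1) := hmono (j - 2) (j - 1) (by omega) (by omega)
    have E1 : P j = s j - s (j - 1) := hPj j (by omega)
    have E2 : P (j - 1) = s (j - 1) - s (j - 2) := by
      rw [hPj (j - 1) (by omega), show j - 1 - 1 = j - 2 from by omega]
    set m := 2 * s (j - 1) - s j with hm
    clear_value m
    have hm1 : 1 ≤ m := by
      rcases eq_or_lt_of_le hj2 with h | h
      · -- j = 2 : P (j-2) = P 0 = s 0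
        have hj : j = 2 := h.symm
        subst hj
        simp only [show (2:ℕ) - 1 = 1 from rfl, show (2:ℕ) - 2 = 0 from rfl] at *
        have E0 : P 0 = s 0 := hP0
        omega
      · have h3 : 3 ≤ j := h
        have E3 : P (j - 2) = s (j - 2) - s (j - 3) := by
          rw [hPj (j - 2) (by omega), show j - 2 - 1 = j - 3 from by omega]
        have hwx : s (j - 3) < s (j - 2) := hmono (j - 3) (j - 2) (by omega) (by omega)
        have hw : 1 ≤ s (j - 3) := hpos (j - 3) (by omega)
        omega
    obtain ⟨j', hj', hsj'⟩ := hloc m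
      (mpe_star hiT (hmem (j - 1) (by omega)) (hmem j (by omega)) hyz (by omega) hm1)
    have hmy : m < s (j - 1) := by omega
    have hmne : m ≠ s (j - 2) := by omega
    -- m < s (j-1), m ∈ image, m ≠ s (j-2) : derive contradiction
    rcases eq_or_lt_of_le hj2 with h | h
    · -- j = 2 : then j' must satisfy s j' = m < s 1, m ≠ s 0
      have hj : j = 2 := h.symm
      subst hj
      simp only [show (2:ℕ) - 1 = 1 from rfl, show (2:ℕ) - 2 = 0 from rfl] at *
      rcases lt_trichotomy j' 1 with h0 | h0 | h0
      · have hj0 : j' = 0 := by omega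
        subst hj0; exact hmne hsj'.symm
      · subst h0
        have hs12 : s 1 < s 2 := hmono 1 2 (by omega) (by omega)
        omega
      · have := hmono 1 j' h0 hj'
        have := hmono 1 2 (by omega) (by omega)
        omega
    · -- j ≥ 3
      have h3 : 3 ≤ j := h
      have hmx : s (j - 3) < m := by
        have E3 : P (j - 2) = s (j - 2) - s (j - 3) := by
          rw [hPj (j - 2) (by omega), show j - 2 - 1 = j - 3 from by omega]
        omega
      rcases lt_trichotomy j' (j - 2) with hh | hh | hh
      · rcases lt_trichotomy j' (j - 3) with hh' | hh' | hh'
        · have := hmono j' (j - 3) hh' (by omega); omega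
        · subst hh'; omega
        · omega
      · rw [hh] at hsj'; exact hmne hsj'.symm
      · rcases lt_trichotomy j' (j - 1) with hh' | hh' | hh'
        · omega
        · rw [hh'] at hsj'; omega
        · have := hmono (j - 1) j' hh' hj'; omega
  -- the set of change points
  set F := (Finset.Icc 1 (g - 1)).filter (fun j => diffs s j ≠ diffs s (j - 1)) with hF
  have hFmem : ∀ j ∈ F, 1 ≤ j ∧ j ≤ g - 1 ∧ P (j - 1) < P j := by
    intro j hj
    rw [hF, Finset.mem_filter, Finset.mem_Icc] at hj
    obtain ⟨⟨ha, hb⟩, hne⟩ := hj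
    exact ⟨ha, hb, lt_of_le_of_ne (stepN j ha hb) (Ne.symm hne)⟩
  -- doubling along three change points
  have key3 : ∀ j ∈ F, ∀ j' ∈ F, ∀ j'' ∈ F, j < j' → j' < j'' →
      Nat.log 2 (P j) < Nat.log 2 (P j'') := by
    intro j hj j' hj' j'' hj'' h1 h2
    obtain ⟨ha, hb, hc⟩ := hFmem j hj
    obtain ⟨ha', hb', hc'⟩ := hFmem j' hj'
    obtain ⟨ha'', hb'', hc''⟩ := hFmem j'' hj''
    have hfib := stepF j'' (by omega) hb'' hc''
    have hm1 : P j' ≤ P (j'' - 1) := monoP j' (j'' - 1) (by omega) (by omega)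
    have hm2 : P j ≤ P (j'' - 2) := monoP j (j'' - 2) (by omega) (by omega)
    have hm3 : P j ≤ P j' := monoP j j' (by omega) (by omega)
    have hdbl : 2 * P j ≤ P j'' := by omega
    have hP1 : 1 ≤ P j := by
      rw [hPj j (by omega)]
      have := hmono (j - 1) j (by omega) (by omega)
      omega
    calc Nat.log 2 (P j) < Nat.log 2 (P j) + 1 := Nat.lt_succ_self _
      _ = Nat.log 2 (P j * 2) := (Nat.log_mul_base (by norm_num) (by omega)).symm
      _ ≤ Nat.log 2 (P j'') := Nat.log_mono_right (by omega)
  -- fibers of log ∘ P on F have at most 2 elements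
  have hfiber : ∀ b ∈ F.image (fun j => Nat.log 2 (P j)),
      (F.filter (fun x => Nat.log 2 (P x) = b)).card ≤ 2 := by
    intro b _
    by_contra hcard
    push_neg at hcard
    obtain ⟨x, hx, y, hy, z, hz, hxy, hxz, hyz⟩ := Finset.two_lt_card.mp hcard
    rw [Finset.mem_filter] at hx hy hz
    have triple : ∀ u v w, u ∈ F → v ∈ F → w ∈ F →
        Nat.log 2 (P u) = b → Nat.log 2 (P w) = b → u < v → v < w → False := by
      intro u v w hu hv hw hbu hbw huv hvw
      have := key3 u hu v hv w hw huv hvw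
      omega
    rcases lt_trichotomy x y with h1 | h1 | h1
    · rcases lt_trichotomy y z with h2 | h2 | h2
      · exact triple x y z hx.1 hy.1 hz.1 hx.2 hz.2 h1 h2
      · exact hyz h2
      · rcases lt_trichotomy x z with h3 | h3 | h3
        · exact triple x z y hx.1 hz.1 hy.1 hx.2 hy.2 h3 h2
        · exact hxz h3
        · exact triple z x y hz.1 hx.1 hy.1 hz.2 hy.2 h3 h1
    · exact hxy h1
    · rcases lt_trichotomy x z with h2 | h2 | h2
      · exact triple y x z hy.1 hx.1 hz.1 hy.2 hz.2 h1 h2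
      · exact hxz h2
      · rcases lt_trichotomy y z with h3 | h3 | h3
        · exact triple y z x hy.1 hz.1 hx.1 hy.2 hx.2 h3 h2
        · exact hyz h3
        · exact triple z y x hz.1 hy.1 hx.1 hz.2 hx.2 h3 h1
  -- bound the image
  have himg : F.image (fun j => Nat.log 2 (P j)) ⊆ Finset.range (Nat.log 2 i + 1) := by
    intro b hb
    rw [Finset.mem_image] at hb
    obtain ⟨j, hj, hbj⟩ := hb
    obtain ⟨ha, hb', _⟩ := hFmem j hj
    have hPle : P j ≤ i := by
      rw [hPj j (by omega)]
      have := hle j (by omega)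
      omega
    rw [Finset.mem_range, ← hbj]
    exact Nat.lt_succ_of_le (Nat.log_mono_right hPle)
  -- final counting
  have hcount : F.card ≤ 2 * (Nat.log 2 i + 1) := by
    calc F.card = ∑ b ∈ F.image (fun j => Nat.log 2 (P j)),
          (F.filter (fun x => Nat.log 2 (P x) = b)).card :=
        Finset.card_eq_sum_card_image _ F
      _ ≤ ∑ _b ∈ F.image (fun j => Nat.log 2 (P j)), 2 :=
        Finset.sum_le_sum hfiber
      _ = 2 * (F.image (fun j => Nat.log 2 (P j))).card := by
        rw [Finset.sum_const, smul_eq_mul, mul_comm]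
      _ ≤ 2 * (Nat.log 2 i + 1) := by
        have := Finset.card_le_card himg
        rw [Finset.card_range] at this
        omega
  omega
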